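/- arXiv:1812.07075 — 5 statements merged into one kernel-verified Lean document; each statement's English description precedes it below -/
import Mathlib

section
/- Let C be a set of p ≥ 1 edges of a finite simple triangle-free graph in which every vertex has degree at most 3. Then the entropy impurity of C satisfies I_Ent(C) ≥ 2p + p·log₂ p. -/
/-!
Let `C` span the graph `H` with `m` edges and degree function `d`. As `∑ d = 2m`, the impurity
equals `2m + 2m log₂ m - ∑ d log₂ d`, so it suffices that `∑ d log d ≤ m log m` when `H`
is triangle-free. There the neighbourhood of `u` is independent, so the stars of the neighbours
of `u` are disjoint and `∑_{v ∼ u} d v ≤ m`. Jensen's inequality for `log` on `N(u)` gives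
`∑_{v ∼ u} log d v ≤ d u (log m - log d u)`. Summed over `u`, the left side is
`∑_v d v log d v` and the right side is `2m log m - ∑_u d u log d u`.
-/

open scoped Classical

/-- The entropy impurity of a set `C` of edges:
`I_Ent(C) = Σ_{v ∈ V} d^C(v) · log₂(2|C| / d^C(v))`. -/
noncomputable def impurity {V : Type*} [Fintype V] (C : Finset (Sym2 V)) : ℝ :=
  ∑ v : V, ((C.filter (fun e => v ∈ e)).card : ℝ) *
    Real.logb 2 ((2 * C.card : ℝ) / ((C.filter (fun e => v ∈ e)).card : ℝ))

open Finset Real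

theorem Real.sum_log_le_card_mul_sub_log_card {ι : Type*} (s : Finset ι) {x : ι → ℝ}
    (hx : ∀ i ∈ s, 0 < x i) {M : ℝ} (hM : ∑ i ∈ s, x i ≤ M) :
    ∑ i ∈ s, log (x i) ≤ #s * (log M - log #s) := by
  rcases s.eq_empty_or_nonempty with rfl | hs
  · simp
  have hn : (0 : ℝ) < #s := by exact_mod_cast hs.card_pos
  have hsum : 0 < ∑ i ∈ s, x i := sum_pos hx hs
  have jensen :
      ∑ i ∈ s, (#s : ℝ)⁻¹ • log (x i) ≤ log (∑ i ∈ s, (#s : ℝ)⁻¹ • x i) :=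
    strictConcaveOn_log_Ioi.concaveOn.le_map_sum (fun _ _ => by positivity)
      (by simp [hn.ne']) hx
  simp only [smul_eq_mul, ← mul_sum] at jensen
  calc ∑ i ∈ s, log (x i) = #s * ((#s : ℝ)⁻¹ * ∑ i ∈ s, log (x i)) := by field_simp
    _ ≤ #s * log ((#s : ℝ)⁻¹ * M) := by gcongr; exact jensen.trans (by gcongr)
    _ = #s * (log M - log #s) := by
      rw [log_mul (by positivity) (by linarith), log_inv]; ring

namespace SimpleGraph

variable {V : Type*} [Fintype V] (G : SimpleGraph V) [DecidableRel G.Adj]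

theorem sum_sum_neighborFinset {M : Type*} [AddCommMonoid M] (f : V → M) :
    ∑ u, ∑ v ∈ G.neighborFinset u, f v = ∑ v, G.degree v • f v := by
  rw [sum_comm' (t' := univ) (s' := fun v => G.neighborFinset v) (by simp [adj_comm])]
  simp only [sum_const, card_neighborFinset_eq_degree]

variable [Fintype G.edgeSet]

/-- `sum_degrees_eq_twice_card_edges` for an arbitrary `Fintype G.edgeSet` instance, such as the
one `fromEdgeSet` carries. -/
theorem sum_degrees_eq_twice_card_edgeFinset :
    ∑ v, G.degree v = 2 * #G.edgeFinset := by
  convert G.sum_degrees_eq_twice_card_edges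

theorem impurity_edgeFinset : impurity G.edgeFinset =
    2 * #G.edgeFinset * (1 + logb 2 #G.edgeFinset) -
      ∑ v, (G.degree v : ℝ) * logb 2 (G.degree v) := by
  have hdeg (v : V) : #{e ∈ G.edgeFinset | v ∈ e} = G.degree v := by
    rw [← card_incidenceFinset_eq_degree, incidenceFinset_eq_filter]
  have hterm (v : V) : (G.degree v : ℝ) * logb 2 (2 * #G.edgeFinset / G.degree v) =
      G.degree v * (1 + logb 2 #G.edgeFinset) - G.degree v * logb 2 (G.degree v) := by
    rcases (G.degree v).eq_zero_or_pos with h0 | hpos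
    · simp [h0]
    have hm : 0 < #G.edgeFinset := hpos.trans_le (hdeg v ▸ card_le_card (filter_subset _ _))
    rw [logb_div (by positivity) (by positivity), logb_mul (by norm_num) (by positivity),
      logb_self_eq_one one_lt_two]
    ring
  have hhandshake : ∑ v, (G.degree v : ℝ) = 2 * #G.edgeFinset := by
    exact_mod_cast G.sum_degrees_eq_twice_card_edgeFinset
  simp only [impurity, hdeg, hterm, sum_sub_distrib, ← sum_mul, hhandshake]

variable {G}

theorem CliqueFree.sum_degree_neighborFinset_le (h : G.CliqueFree 3) (u : V) :
    ∑ v ∈ G.neighborFinset u, G.degree v ≤ #G.edgeFinset := by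
  have hdisj : (G.neighborFinset u : Set V).PairwiseDisjoint fun v => G.incidenceFinset v := by
    intro v hv w hw hvw
    rw [Function.onFun, ← disjoint_coe, coe_incidenceFinset, coe_incidenceFinset,
      Set.disjoint_iff_inter_eq_empty]
    refine G.incidenceSet_inter_incidenceSet_of_not_adj ?_ hvw
    exact isIndepSet_neighborSet_of_triangleFree G h u (by simpa using hv) (by simpa using hw) hvw
  calc ∑ v ∈ G.neighborFinset u, G.degree v
      = #((G.neighborFinset u).biUnion fun v => G.incidenceFinset v) := by
        simp only [card_biUnion hdisj, card_incidenceFinset_eq_degree]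
    _ ≤ #G.edgeFinset := card_le_card (biUnion_subset.2 fun v _ => G.incidenceFinset_subset v)

theorem CliqueFree.sum_degree_mul_log_degree_le (h : G.CliqueFree 3) :
    ∑ v, (G.degree v : ℝ) * log (G.degree v) ≤ #G.edgeFinset * log #G.edgeFinset := by
  set m := #G.edgeFinset
  have hneighbors (u : V) : ∑ v ∈ G.neighborFinset u, log (G.degree v) ≤
      G.degree u * (log m - log (G.degree u)) := by
    rw [← card_neighborFinset_eq_degree G u]
    refine sum_log_le_card_mul_sub_log_card _ (fun v hv => ?_) ?_
    · have huv : G.Adj v u := ((G.mem_neighborFinset u v).1 hv).symm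
      exact_mod_cast (G.degree_pos_iff_exists_adj v).2 ⟨u, huv⟩
    · exact_mod_cast h.sum_degree_neighborFinset_le u
  have hhandshake : ∑ v, (G.degree v : ℝ) = 2 * m := by
    exact_mod_cast G.sum_degrees_eq_twice_card_edgeFinset
  have hle : ∑ v, (G.degree v : ℝ) * log (G.degree v) ≤
      2 * m * log m - ∑ u, (G.degree u : ℝ) * log (G.degree u) := calc
    _ = ∑ u, ∑ v ∈ G.neighborFinset u, log (G.degree v) := by
        simp only [sum_sum_neighborFinset, nsmul_eq_mul]
    _ ≤ ∑ u, G.degree u * (log m - log (G.degree u)) := sum_le_sum fun u _ => hneighbors u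
    _ = 2 * m * log m - ∑ u, (G.degree u : ℝ) * log (G.degree u) := by
        simp only [mul_sub, sum_sub_distrib, ← sum_mul, hhandshake]
  linarith

theorem CliqueFree.sum_degree_mul_logb_degree_le (h : G.CliqueFree 3) {b : ℝ} (hb : 1 < b) :
    ∑ v, (G.degree v : ℝ) * logb b (G.degree v) ≤ #G.edgeFinset * logb b #G.edgeFinset := by
  simp only [logb, ← mul_div_assoc, ← sum_div]
  exact div_le_div_of_nonneg_right h.sum_degree_mul_log_degree_le (log_pos hb).le

end SimpleGraph

theorem impurity_lower_bound_general {V : Type*} [Fintype V] (G : SimpleGraph V)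
    (htf : G.CliqueFree 3)
    (C : Finset (Sym2 V)) (p : ℕ)
    (hsub : (↑C : Set (Sym2 V)) ⊆ G.edgeSet) (hcard : C.card = p) :
    2 * (p : ℝ) + (p : ℝ) * Real.logb 2 (p : ℝ) ≤ impurity C := by
  set H := SimpleGraph.fromEdgeSet (C : Set (Sym2 V))
  have hHC : H.edgeFinset = C := by
    rw [← coe_inj, SimpleGraph.coe_edgeFinset, SimpleGraph.edgeSet_fromEdgeSet, sdiff_eq_left]
    exact Set.disjoint_left.2 fun e he => G.not_isDiag_of_mem_edgeSet (hsub he)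
  have hH : H.CliqueFree 3 := htf.anti (by simpa [H] using Set.sdiff_subset.trans hsub)
  have key := hH.sum_degree_mul_logb_degree_le one_lt_two
  have himp := H.impurity_edgeFinset
  rw [hHC, hcard] at key himp
  linarith

/-- if `C` is a set of `p ≥ 1` edges of a finite simple triangle-free
graph in which every vertex has degree at most 3, then `I_Ent(C) ≥ 2p + p·log₂ p`. -/
theorem impurity_lower_bound {V : Type*} [Fintype V] (G : SimpleGraph V)
    [DecidableRel G.Adj]
    (htf : G.CliqueFree 3) (hdeg : ∀ v : V, G.degree v ≤ 3)
    (C : Finset (Sym2 V)) (p : ℕ) (hp : 1 ≤ p)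
    (hsub : (↑C : Set (Sym2 V)) ⊆ G.edgeSet) (hcard : C.card = p) :
    2 * (p : ℝ) + (p : ℝ) * Real.logb 2 (p : ℝ) ≤ impurity C :=
  impurity_lower_bound_general G htf C p hsub hcard
end

section
/- Let C be a set of exactly 3 edges of a finite simple graph such that C is neither a 3-star (three edges sharing a common vertex) nor a triangle (three edges on three vertices). Then the entropy impurity of C satisfies I_Ent(C) ≥ 2 + 6·log₂ 3. -/
/-!
Write `d(v)` for the number of edges of `C` at `v`. The degrees sum to `2|C| = 6`, and none is 3
since `C` is not a star. A vertex of degree 1 contributes `log₂ 6` and one of degree 2 contributes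
`2 log₂ 3 = 2 log₂ 6 - 2`, so `I_Ent(C) = 6 log₂ 6 - 2k` with `k` the number of vertices of
degree 2. Three vertices of degree 2 would carry all six edge-ends, so the three edges would lie
on these three vertices and form a triangle; hence `k ≤ 2`.
-/

open scoped Classical

open Finset Real

theorem mul_logb_two_mul_div_of_le_two {m n : ℕ} (hn : n ≤ 2) (hnm : n ≤ m) :
    (n : ℝ) * logb 2 (2 * m / n) = n * logb 2 (2 * m) - if n = 2 then 2 else 0 := by
  interval_cases n
  · simp
  · simp
  · have hm : (m : ℝ) ≠ 0 := Nat.cast_ne_zero.2 (by omega)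
    rw [logb_mul two_ne_zero hm, logb_self_eq_one one_lt_two]
    norm_num
    ring

section

variable {V : Type*} (C : Finset (Sym2 V))

/-- The degree `d^C(v)`. -/
noncomputable def edgeDegree (v : V) : ℕ := #(C.filter (fun e => v ∈ e))

theorem edgeDegree_le_card (v : V) : edgeDegree C v ≤ #C := card_filter_le _ _

theorem edgeDegree_eq_zero_iff {v : V} : edgeDegree C v = 0 ↔ ∀ e ∈ C, v ∉ e :=
  card_filter_eq_zero_iff

theorem forall_mem_of_card_le_edgeDegree {v : V} (h : #C ≤ edgeDegree C v) :
    ∀ e ∈ C, v ∈ e :=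
  filter_eq_self.1 (eq_of_subset_of_card_le (filter_subset _ C) h)

variable {C}

theorem sum_edgeDegree [Fintype V] (hC : ∀ e ∈ C, ¬ e.IsDiag) :
    ∑ v, edgeDegree C v = 2 * #C :=
  calc ∑ v, edgeDegree C v = ∑ e ∈ C, #(univ.filter (· ∈ e)) :=
        sum_card_bipartiteAbove_eq_sum_card_bipartiteBelow (fun v e => v ∈ e)
    _ = ∑ e ∈ C, 2 := sum_congr rfl fun e he => by
        rw [← Sym2.card_toFinset_of_not_isDiag e (hC e he)]
        congr 1
        ext v
        simp [Sym2.mem_toFinset]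
    _ = 2 * #C := by rw [sum_const, smul_eq_mul, mul_comm]

theorem subset_triangle_of_forall_mem (hC : ∀ e ∈ C, ¬ e.IsDiag) {x y z : V}
    (h : ∀ e ∈ C, ∀ v ∈ e, v = x ∨ v = y ∨ v = z) :
    C ⊆ {s(x, y), s(y, z), s(x, z)} := by
  intro e he
  induction e using Sym2.ind with
  | _ a b =>
    have hab : a ≠ b := by simpa using hC _ he
    have ha := h _ he a (Sym2.mem_mk_left a b)
    have hb := h _ he b (Sym2.mem_mk_right a b)
    simp only [mem_insert, mem_singleton]
    rcases ha with rfl | rfl | rfl <;> rcases hb with rfl | rfl | rfl <;> simp_all [Sym2.eq_swap]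

theorem card_filter_edgeDegree_eq_two_le [Fintype V] (hC : ∀ e ∈ C, ¬ e.IsDiag)
    (hcard : #C = 3)
    (hT : ¬ ∃ x y z : V, C = {s(x, y), s(y, z), s(x, z)}) :
    #(univ.filter (fun v => edgeDegree C v = 2)) ≤ 2 := by
  by_contra! hk
  obtain ⟨T, hTsub, hT3⟩ := exists_subset_card_eq hk
  obtain ⟨x, y, z, hxy, hxz, hyz, rfl⟩ := card_eq_three.1 hT3
  have hdeg : ∀ v ∈ ({x, y, z} : Finset V), edgeDegree C v = 2 :=
    fun v hv => (mem_filter.1 (hTsub hv)).2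
  have hT6 : ∑ v ∈ {x, y, z}, edgeDegree C v = 6 := by
    rw [sum_congr rfl hdeg, sum_const, hT3, smul_eq_mul]
  have houtside : ∑ v ∈ ({x, y, z} : Finset V)ᶜ, edgeDegree C v = 0 := by
    have := sum_add_sum_compl {x, y, z} (edgeDegree C)
    rw [sum_edgeDegree hC, hcard, hT6] at this
    omega
  have hmem : ∀ e ∈ C, ∀ v ∈ e, v = x ∨ v = y ∨ v = z := by
    intro e he v hv
    by_contra hv'
    have h0 := (sum_eq_zero_iff.1 houtside) v (by simpa using hv')
    exact (edgeDegree_eq_zero_iff C).1 h0 e he hv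
  have htriangle := subset_triangle_of_forall_mem hC hmem
  exact hT ⟨x, y, z, eq_of_subset_of_card_le htriangle (hcard ▸ card_le_three)⟩

theorem impurity_eq_of_edgeDegree_le_two [Fintype V] (hC : ∀ e ∈ C, ¬ e.IsDiag)
    (hdeg : ∀ v, edgeDegree C v ≤ 2) :
    impurity C = 2 * #C * logb 2 (2 * #C) - 2 * #(univ.filter (fun v => edgeDegree C v = 2)) := by
  calc impurity C = ∑ v, ((edgeDegree C v : ℝ) * logb 2 (2 * #C)
        - if edgeDegree C v = 2 then 2 else 0) :=
        sum_congr rfl fun v _ => mul_logb_two_mul_div_of_le_two (hdeg v) (edgeDegree_le_card C v)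
    _ = _ := by
        rw [sum_sub_distrib, ← sum_mul, ← Nat.cast_sum, sum_edgeDegree hC, sum_ite,
          sum_const_zero, sum_const, nsmul_eq_mul]
        push_cast
        ring

end

/-- if `C` is a set of exactly 3 edges of a finite simple graph which is
neither a 3-star (all three edges share a common vertex) nor a triangle (three edges
spanned by three vertices), then `I_Ent(C) ≥ 2 + 6·log₂ 3`. -/
theorem impurity_three_edges {V : Type*} [Fintype V] (G : SimpleGraph V)
    (C : Finset (Sym2 V)) (hsub : (↑C : Set (Sym2 V)) ⊆ G.edgeSet)
    (hcard : C.card = 3)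
    (hnotstar : ¬ ∃ v : V, ∀ e ∈ C, v ∈ e)
    (hnottriangle : ¬ ∃ x y z : V, C = {s(x, y), s(y, z), s(x, z)}) :
    2 + 6 * Real.logb 2 3 ≤ impurity C := by
  have hC : ∀ e ∈ C, ¬ e.IsDiag := fun e he => G.not_isDiag_of_mem_edgeSet (hsub he)
  have hdeg : ∀ v, edgeDegree C v ≤ 2 := fun v => by
    have hne : edgeDegree C v ≠ 3 := fun h =>
      hnotstar ⟨v, forall_mem_of_card_le_edgeDegree C (by omega)⟩
    have hle := edgeDegree_le_card C v
    omega
  have hk : (#(univ.filter (fun v => edgeDegree C v = 2)) : ℝ) ≤ 2 := by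
    exact_mod_cast card_filter_edgeDegree_eq_two_le hC hcard hnottriangle
  have hlog6 : logb 2 6 = 1 + logb 2 3 := by
    rw [show (6 : ℝ) = 2 * 3 by norm_num, logb_mul two_ne_zero three_ne_zero,
      logb_self_eq_one one_lt_two]
  rw [impurity_eq_of_edgeDegree_le_two hC hdeg, hcard]
  norm_num [hlog6]
  linarith
end

section
/- Let G be a finite simple graph, let ε > 0, and let k be a positive integer such that every vertex cover of G has size at least k(1+ε). Let the edge set of G be partitioned into k nonempty clusters, and classify them as follows: a is the number of clusters that are 3-stars, b the number that are 2-stars, c the number consisting of a single edge, d the number consisting of 2 edges with no common vertex, and let q be the total number of edges in the remaining clusters. Then c + d + q ≥ kε/2. -/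
open scoped Classical

/-- A vertex cover: a set of vertices touching every edge. -/
def IsVCover {V : Type*} (G : SimpleGraph V) (S : Finset V) : Prop :=
  ∀ e ∈ G.edgeSet, ∃ v ∈ S, v ∈ e

/-- A `p`-star: a set of `p` edges all sharing a common vertex. -/
def IsStar {V : Type*} (p : ℕ) (C : Finset (Sym2 V)) : Prop :=
  C.card = p ∧ ∃ v : V, ∀ e ∈ C, v ∈ e

/-!
Cover every cluster separately: a cluster whose edges share a vertex by that vertex, any other
cluster by one endpoint of each of its edges. Every 3-star, 2-star and single edge then costs one
vertex, a 2-matching two and a remaining cluster at most its number of edges, so `G` has a vertex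
cover of size at most `k + d + q`. Hence `k * ε ≤ d + q`, which is more than claimed.
-/

section

variable {V : Type*}

noncomputable def clusterCover (C : Finset (Sym2 V)) : Finset V :=
  if h : ∃ v, ∀ e ∈ C, v ∈ e then {h.choose} else C.image fun e => e.out.1

theorem exists_mem_clusterCover {C : Finset (Sym2 V)} {e : Sym2 V} (he : e ∈ C) :
    ∃ v ∈ clusterCover C, v ∈ e := by
  unfold clusterCover
  split_ifs with h
  · exact ⟨h.choose, Finset.mem_singleton_self _, h.choose_spec e he⟩
  · exact ⟨e.out.1, Finset.mem_image_of_mem _ he, Sym2.out_fst_mem e⟩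

theorem card_clusterCover_of_exists {C : Finset (Sym2 V)} (h : ∃ v, ∀ e ∈ C, v ∈ e) :
    (clusterCover C).card = 1 := by
  simp [clusterCover, h]

theorem card_clusterCover_le_of_not_exists {C : Finset (Sym2 V)} (h : ¬∃ v, ∀ e ∈ C, v ∈ e) :
    (clusterCover C).card ≤ C.card := by
  simpa [clusterCover, h] using Finset.card_image_le

theorem exists_forall_mem_of_card_eq_one {C : Finset (Sym2 V)} (h : C.card = 1) :
    ∃ v, ∀ e ∈ C, v ∈ e := by
  obtain ⟨e, rfl⟩ := Finset.card_eq_one.mp h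
  exact ⟨e.out.1, fun e' he' => Finset.mem_singleton.mp he' ▸ Sym2.out_fst_mem e⟩

/-- Apart from one vertex, `clusterCover C` is paid for by a 2-matching or a remaining cluster. -/
theorem card_clusterCover_le (C : Finset (Sym2 V)) :
    (clusterCover C).card ≤ 1 + (if C.card = 2 ∧ ¬ IsStar 2 C then 1 else 0) +
      (if ¬ IsStar 3 C ∧ ¬ IsStar 2 C ∧ C.card ≠ 1 ∧ ¬ (C.card = 2 ∧ ¬ IsStar 2 C)
        then C.card else 0) := by
  by_cases hstar : ∃ v, ∀ e ∈ C, v ∈ e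
  · rw [card_clusterCover_of_exists hstar]
    omega
  have hle := card_clusterCover_le_of_not_exists hstar
  have h3 : ¬ IsStar 3 C := fun h => hstar h.2
  have h2 : ¬ IsStar 2 C := fun h => hstar h.2
  have h1 : C.card ≠ 1 := fun h => hstar (exists_forall_mem_of_card_eq_one h)
  by_cases hcard : C.card = 2
  · rw [if_pos ⟨hcard, h2⟩]
    omega
  · rw [if_neg fun h => hcard h.1, if_pos ⟨h3, h2, h1, fun h => hcard h.1⟩]
    omega

theorem isVCover_biUnion_clusterCover {ι : Type*} [Fintype ι] (G : SimpleGraph V)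
    (C : ι → Finset (Sym2 V)) (hcover : ∀ e ∈ G.edgeSet, ∃ i, e ∈ C i) :
    IsVCover G (Finset.univ.biUnion fun i => clusterCover (C i)) := by
  intro e he
  obtain ⟨i, hi⟩ := hcover e he
  obtain ⟨v, hv, hve⟩ := exists_mem_clusterCover hi
  exact ⟨v, Finset.mem_biUnion.mpr ⟨i, Finset.mem_univ i, hv⟩, hve⟩

end

theorem remaining_clusters_bound_general {V : Type*} (G : SimpleGraph V)
    (ε : ℝ) (k : ℕ)
    (hVC : ∀ S : Finset V, IsVCover G S → (k : ℝ) * (1 + ε) ≤ S.card)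
    (C : Fin k → Finset (Sym2 V))
    (hcover : ∀ e : Sym2 V, e ∈ G.edgeSet ↔ ∃ i, e ∈ C i)
    (c d : ℕ) (q : ℕ)
    (hd : d = (Finset.univ.filter fun i =>
      (C i).card = 2 ∧ ¬ IsStar 2 (C i)).card)
    (hq : q = ∑ i ∈ Finset.univ.filter (fun i =>
        ¬ IsStar 3 (C i) ∧ ¬ IsStar 2 (C i) ∧ (C i).card ≠ 1 ∧
          ¬ ((C i).card = 2 ∧ ¬ IsStar 2 (C i))), (C i).card) :
    (k : ℝ) * ε / 2 ≤ (c : ℝ) + d + q := by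
  set S := Finset.univ.biUnion fun i => clusterCover (C i)
  have hS : S.card ≤ k + d + q :=
    calc S.card ≤ ∑ i, (clusterCover (C i)).card := Finset.card_biUnion_le
      _ ≤ ∑ i, _ := Finset.sum_le_sum fun i _ => card_clusterCover_le (C i)
      _ = k + d + q := by
        simp only [Finset.sum_add_distrib, Finset.sum_const, Finset.card_univ, Fintype.card_fin,
          smul_eq_mul, mul_one, ← Finset.sum_filter, hd, hq]
  have hkε : (k : ℝ) * ε ≤ d + q := by
    have := hVC S (isVCover_biUnion_clusterCover G C fun e => (hcover e).mp)
    have : (S.card : ℝ) ≤ k + d + q := by exact_mod_cast hS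
    linarith
  have : (0 : ℝ) ≤ c := c.cast_nonneg
  have : (0 : ℝ) ≤ d + q := by positivity
  linarith

/-- let `G` be a graph all of whose vertex covers have size at least
`k(1+ε)`, and let the edge set of `G` be partitioned into `k` nonempty clusters.
With `a` = number of 3-star clusters, `b` = number of 2-star clusters, `c` = number of
single-edge clusters, `d` = number of 2-matching clusters (2 edges, no common vertex),
and `q` = total number of edges in all remaining clusters, one has `c + d + q ≥ kε/2`. -/
theorem remaining_clusters_bound {V : Type*} [Fintype V] (G : SimpleGraph V)
    (ε : ℝ) (hε : 0 < ε) (k : ℕ) (hk : 0 < k)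
    (hVC : ∀ S : Finset V, IsVCover G S → (k : ℝ) * (1 + ε) ≤ S.card)
    (C : Fin k → Finset (Sym2 V))
    (hdisj : ∀ i j, i ≠ j → Disjoint (C i) (C j))
    (hcover : ∀ e : Sym2 V, e ∈ G.edgeSet ↔ ∃ i, e ∈ C i)
    (hne : ∀ i, (C i).Nonempty)
    (c d : ℕ) (q : ℕ)
    (hc : c = (Finset.univ.filter fun i => (C i).card = 1).card)
    (hd : d = (Finset.univ.filter fun i =>
      (C i).card = 2 ∧ ¬ IsStar 2 (C i)).card)
    (hq : q = ∑ i ∈ Finset.univ.filter (fun i =>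
        ¬ IsStar 3 (C i) ∧ ¬ IsStar 2 (C i) ∧ (C i).card ≠ 1 ∧
          ¬ ((C i).card = 2 ∧ ¬ IsStar 2 (C i))), (C i).card) :
    (k : ℝ) * ε / 2 ≤ (c : ℝ) + d + q :=
  remaining_clusters_bound_general G ε k hVC C hcover c d q hd hq
end

section
/- Let p^(1), …, p^(n) be probability vectors in ℝ^d (nonnegative components summing to 1) with all components positive, and let V₁, …, V_k be a partition of {p^(1), …, p^(n)}. For each i, let c^(i) ∈ ℝ^d be the centroid of V_i, i.e., c^(i)_j = (Σ_{p∈V_i} p_j)/|V_i|. Then Σ_{i=1}^{k} Σ_{p∈V_i} KL(p, c^(i)) = Σ_{i=1}^{k} Ĩ(Σ_{p∈V_i} p) − Σ_{l=1}^{n} Ĩ(p^(l)), where KL(p,q) = Σ_{j=1}^{d} p_j·ln(p_j/q_j) and Ĩ(v) = Σ_{j=1}^{d} v_j·ln(‖v‖₁/v_j) with ‖v‖₁ = Σⱼ v_j. -/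
/-!
The identity holds cluster by cluster. Expand `Ĩ(v) = ‖v‖₁ ln ‖v‖₁ - Σⱼ vⱼ ln vⱼ` and
`KL(p, q) = Σⱼ pⱼ ln pⱼ - Σⱼ pⱼ ln qⱼ`. For a cluster `S` with sum `s` the cross-entropy
terms against the centroid `s / |S|` add up to `Σⱼ sⱼ ln sⱼ - ‖s‖₁ ln |S|`, which is `-Ĩ(s)`
because `‖s‖₁ = |S|` for probability vectors; and each `Ĩ(p)` is just `-Σⱼ pⱼ ln pⱼ`.
-/

/-- The entropy impurity (in nats) of a vector `v` with positive components:
`Ĩ(v) = Σⱼ vⱼ · ln(‖v‖₁ / vⱼ)`. -/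
noncomputable def natImpurity {d : ℕ} (v : Fin d → ℝ) : ℝ :=
  ∑ j, v j * Real.log ((∑ j', v j') / v j)

/-- The Kullback–Leibler divergence (in nats): `KL(p, q) = Σⱼ pⱼ · ln(pⱼ / qⱼ)`. -/
noncomputable def klDiv {d : ℕ} (p q : Fin d → ℝ) : ℝ :=
  ∑ j, p j * Real.log (p j / q j)

open Finset Real

lemma natImpurity_eq_sub {d : ℕ} {v : Fin d → ℝ} (hv : ∀ j, v j ≠ 0) (hsum : ∑ j, v j ≠ 0) :
    natImpurity v = (∑ j, v j) * log (∑ j, v j) - ∑ j, v j * log (v j) := by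
  rw [natImpurity, sum_mul, ← sum_sub_distrib]
  refine sum_congr rfl fun j _ => ?_
  rw [log_div hsum (hv j)]
  ring

lemma klDiv_eq_sub {d : ℕ} {p q : Fin d → ℝ} (hp : ∀ j, p j ≠ 0) (hq : ∀ j, q j ≠ 0) :
    klDiv p q = ∑ j, p j * log (p j) - ∑ j, p j * log (q j) := by
  rw [klDiv, ← sum_sub_distrib]
  refine sum_congr rfl fun j _ => ?_
  rw [log_div (hp j) (hq j)]
  ring

lemma sum_klDiv_eq_sub {ι : Type*} {d : ℕ} (S : Finset ι) {p : ι → Fin d → ℝ} {q : Fin d → ℝ}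
    (hp : ∀ l ∈ S, ∀ j, p l j ≠ 0) (hq : ∀ j, q j ≠ 0) :
    ∑ l ∈ S, klDiv (p l) q
      = ∑ l ∈ S, ∑ j, p l j * log (p l j) - ∑ j, (∑ l ∈ S, p l j) * log (q j) := by
  rw [sum_congr rfl fun l hl => klDiv_eq_sub (hp l hl) hq, sum_sub_distrib]
  simp only [sum_mul]
  rw [sum_comm (s := univ)]

lemma natImpurity_of_sum_eq_one {d : ℕ} {v : Fin d → ℝ} (hv : ∀ j, v j ≠ 0)
    (h1 : ∑ j, v j = 1) :
    natImpurity v = -∑ j, v j * log (v j) := by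
  rw [natImpurity_eq_sub hv (h1 ▸ one_ne_zero), h1, log_one]
  ring

lemma sum_klDiv_centroid_eq_natImpurity_sub {ι : Type*} {d : ℕ} (S : Finset ι)
    {p : ι → Fin d → ℝ}
    (hp : ∀ l ∈ S, ∀ j, 0 < p l j) (hp1 : ∀ l ∈ S, ∑ j, p l j = 1) :
    ∑ l ∈ S, klDiv (p l) (fun j => (∑ m ∈ S, p m j) / S.card)
      = natImpurity (fun j => ∑ l ∈ S, p l j) - ∑ l ∈ S, natImpurity (p l) := by
  rcases S.eq_empty_or_nonempty with rfl | hS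
  · simp [natImpurity]
  set s : Fin d → ℝ := fun j => ∑ l ∈ S, p l j with hs_def
  have hs : ∀ j, 0 < s j := fun j => sum_pos (fun l hl => hp l hl j) hS
  have hcard : (0 : ℝ) < S.card := by exact_mod_cast hS.card_pos
  have hs_sum : ∑ j, s j = S.card := by
    rw [hs_def, sum_comm, sum_congr rfl hp1, sum_const, nsmul_one]
  have hcross : ∑ j, s j * log (s j / S.card)
      = ∑ j, s j * log (s j) - S.card * log S.card := by
    simp only [log_div (hs _).ne' hcard.ne', mul_sub, sum_sub_distrib, ← sum_mul, hs_sum]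
  rw [sum_klDiv_eq_sub S (fun l hl j => (hp l hl j).ne') fun j => (div_pos (hs j) hcard).ne',
    hcross, natImpurity_eq_sub (fun j => (hs j).ne') (hs_sum ▸ hcard.ne'), hs_sum,
    sum_congr rfl fun l hl => natImpurity_of_sum_eq_one (fun j => (hp l hl j).ne') (hp1 l hl),
    sum_neg_distrib]
  ring

theorem kl_clustering_eq_impurity_general {n d k : ℕ}
    (p : Fin n → Fin d → ℝ)
    (hp : ∀ l j, 0 < p l j) (hp1 : ∀ l, ∑ j, p l j = 1)
    (Vp : Fin k → Finset (Fin n))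
    (hdisj : ∀ i j, i ≠ j → Disjoint (Vp i) (Vp j))
    (hcover : Finset.univ.biUnion Vp = (Finset.univ : Finset (Fin n))) :
    (∑ i, ∑ l ∈ Vp i,
        klDiv (p l) (fun j => (∑ m ∈ Vp i, p m j) / (Vp i).card))
      = (∑ i, natImpurity (fun j => ∑ l ∈ Vp i, p l j)) -
          ∑ l, natImpurity (p l) := by
  rw [sum_congr rfl fun i _ =>
      sum_klDiv_centroid_eq_natImpurity_sub (Vp i) (fun l _ => hp l) (fun l _ => hp1 l),
    sum_sub_distrib, ← sum_biUnion fun i _ j _ hij => hdisj i j hij, hcover]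

/-- for probability vectors `p⁽¹⁾, …, p⁽ⁿ⁾` with positive components
partitioned into groups `V₁, …, V_k`, with `c⁽ⁱ⁾` the centroid of `Vᵢ`, one has
`Σᵢ Σ_{p ∈ Vᵢ} KL(p, c⁽ⁱ⁾) = Σᵢ Ĩ(Σ_{p ∈ Vᵢ} p) − Σₗ Ĩ(p⁽ˡ⁾)`. -/
theorem kl_clustering_eq_impurity {n d k : ℕ}
    (p : Fin n → Fin d → ℝ)
    (hp : ∀ l j, 0 < p l j) (hp1 : ∀ l, ∑ j, p l j = 1)
    (Vp : Fin k → Finset (Fin n))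
    (hdisj : ∀ i j, i ≠ j → Disjoint (Vp i) (Vp j))
    (hcover : Finset.univ.biUnion Vp = (Finset.univ : Finset (Fin n)))
    (hne : ∀ i, (Vp i).Nonempty) :
    (∑ i, ∑ l ∈ Vp i,
        klDiv (p l) (fun j => (∑ m ∈ Vp i, p m j) / (Vp i).card))
      = (∑ i, natImpurity (fun j => ∑ l ∈ Vp i, p l j)) -
          ∑ l, natImpurity (p l) :=
  kl_clustering_eq_impurity_general p hp hp1 Vp hdisj hcover
end

section
/- Let x and y be real numbers with 3 ≤ x and y ≥ x + 2. Then (2x + x·log₂ x) + (2y + y·log₂ y) ≥ (2(x+1) + (x+1)·log₂(x+1)) + (2(y−1) + (y−1)·log₂(y−1)). -/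
open Real Set

theorem ConvexOn.map_add_map_le_of_add_eq {𝕜 β : Type*} [Field 𝕜] [LinearOrder 𝕜]
    [IsStrictOrderedRing 𝕜] [AddCommGroup β] [PartialOrder β] [IsOrderedAddMonoid β]
    [Module 𝕜 β] {s : Set 𝕜} {f : 𝕜 → β} (hf : ConvexOn 𝕜 s f) {a b x y : 𝕜}
    (ha : a ∈ s) (hb : b ∈ s) (hax : a ≤ x) (hxb : x ≤ b) (hsum : x + y = a + b) :
    f x + f y ≤ f a + f b := by
  rcases (hax.trans hxb).eq_or_lt with rfl | hab
  · obtain rfl : x = a := le_antisymm hxb hax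
    obtain rfl : y = x := by linarith
    rfl
  -- `x` and `y` are the mirror-image convex combinations of `a` and `b` with weights `θ`, `1 - θ`.
  set θ := (b - x) / (b - a)
  have hba : 0 < b - a := sub_pos.2 hab
  have hθ₀ : 0 ≤ θ := div_nonneg (sub_nonneg.2 hxb) hba.le
  have hθ₁ : 0 ≤ 1 - θ := by
    rw [sub_nonneg, div_le_one hba]
    linarith
  have hx : θ • a + (1 - θ) • b = x := by
    simp only [smul_eq_mul, θ]
    field_simp
    ring
  have hy : (1 - θ) • a + θ • b = y := by
    simp only [smul_eq_mul, θ]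
    field_simp
    linear_combination (a - b) * hsum
  calc f x + f y
      ≤ (θ • f a + (1 - θ) • f b) + ((1 - θ) • f a + θ • f b) := by
        rw [← hx, ← hy]
        exact add_le_add (hf.2 ha hb hθ₀ hθ₁ (by ring)) (hf.2 ha hb hθ₁ hθ₀ (by ring))
    _ = f a + f b := by module

theorem convexOn_mul_logb {b : ℝ} (hb : 1 ≤ b) : ConvexOn ℝ (Ici 0) fun x ↦ x * logb b x :=
  (convexOn_mul_log.smul (inv_nonneg.2 (log_nonneg hb))).congr fun x _ ↦ by
    simp only [smul_eq_mul, logb]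
    ring

/-- smoothing/exchange step: for reals `x, y` with `3 ≤ x` and
`y ≥ x + 2`, replacing the pair `(x, y)` by `(x+1, y−1)` does not increase the total
value of `2t + t·log₂ t`:
`(2x + x·log₂ x) + (2y + y·log₂ y) ≥ (2(x+1) + (x+1)·log₂(x+1)) + (2(y−1) + (y−1)·log₂(y−1))`. -/
theorem exchange_step (x y : ℝ) (hx : 3 ≤ x) (hy : x + 2 ≤ y) :
    (2 * (x + 1) + (x + 1) * Real.logb 2 (x + 1)) +
        (2 * (y - 1) + (y - 1) * Real.logb 2 (y - 1))
      ≤ (2 * x + x * Real.logb 2 x) + (2 * y + y * Real.logb 2 y) := by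
  have hx₀ : x ∈ Ici (0 : ℝ) := mem_Ici.2 (by linarith)
  have hy₀ : y ∈ Ici (0 : ℝ) := mem_Ici.2 (by linarith)
  have key := (convexOn_mul_logb one_le_two).map_add_map_le_of_add_eq (y := y - 1) hx₀ hy₀
    (le_add_of_nonneg_right zero_le_one) (by linarith) (by ring)
  linarith
end
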